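/- arXiv:2310.05792 — 2 statements merged into one kernel-verified Lean document; each statement's English description precedes it below -/
import Mathlib

section
/- Let d ≥ 1, δ > 0, and let L : ℝ^d → ℝ be differentiable with L-Lipschitz gradient, i.e., ‖∇L(θ) − ∇L(θ′)‖ ≤ L‖θ − θ′‖ for all θ, θ′ ∈ ℝ^d. Define L_δ(θ) := E_{w∼Unif(𝔹^d)}[L(θ + δ w)]. Then for every θ ∈ ℝ^d, ‖∇L_δ(θ) − ∇L(θ)‖ ≤ δ L. -/
/-!
Differentiating under the integral sign (the Lipschitz gradient is continuous, hence bounded on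
the compact set the shifts `θ + δw` sweep out), `∇L_δ(θ) = E_w[∇L(θ + δw)]`, so
`∇L_δ(θ) - ∇L(θ) = E_w[∇L(θ + δw) - ∇L(θ)]`, and each integrand has norm at most `L‖δw‖ ≤ δL`
because `w` lies in the unit ball.
-/

open MeasureTheory Metric

/-- The uniform probability distribution on the closed unit ball of `ℝ^d`. -/
noncomputable def unifBall (d : ℕ) : Measure (EuclideanSpace ℝ (Fin d)) :=
  (volume (closedBall (0 : EuclideanSpace ℝ (Fin d)) 1))⁻¹ •
    volume.restrict (closedBall (0 : EuclideanSpace ℝ (Fin d)) 1)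

lemma nonneg_of_norm_sub_le_mul_norm_sub {E F : Type*} [NormedAddCommGroup E] [Nontrivial E]
    [SeminormedAddCommGroup F] {f : E → F} {K : ℝ} (hf : ∀ x y, ‖f x - f y‖ ≤ K * ‖x - y‖) :
    0 ≤ K := by
  obtain ⟨x, hx⟩ := exists_ne (0 : E)
  have := (norm_nonneg _).trans (hf x 0)
  rw [sub_zero] at this
  exact nonneg_of_mul_nonneg_left this (norm_pos_iff.2 hx)

lemma norm_gradient_sub_gradient {𝕜 E : Type*} [RCLike 𝕜] [NormedAddCommGroup E]
    [InnerProductSpace 𝕜 E] [CompleteSpace E] (f g : E → 𝕜) (x y : E) :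
    ‖gradient f x - gradient g y‖ = ‖fderiv 𝕜 f x - fderiv 𝕜 g y‖ := by
  rw [gradient, gradient, ← map_sub, LinearIsometryEquiv.norm_map]

section Smoothing

variable {α E F : Type*} [MeasurableSpace α] {μ : Measure α}
  [NormedAddCommGroup E] [NormedAddCommGroup F] {v : α → E} {R : ℝ}

lemma Continuous.integrable_comp_of_ae_norm_le [ProperSpace E] [IsFiniteMeasure μ] {g : E → F}
    (hg : Continuous g) (hv : AEStronglyMeasurable v μ) (hR : ∀ᵐ a ∂μ, ‖v a‖ ≤ R) :
    Integrable (fun a ↦ g (v a)) μ := by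
  obtain ⟨C, hC⟩ := (isCompact_closedBall (0 : E) R).exists_bound_of_continuousOn hg.continuousOn
  exact .of_bound (hg.comp_aestronglyMeasurable hv) C
    (hR.mono fun a ha ↦ hC _ (mem_closedBall_zero_iff.2 ha))

lemma norm_integral_comp_add_sub_le [IsProbabilityMeasure μ] [NormedSpace ℝ F] [CompleteSpace F]
    {g : E → F}
    {K : NNReal} (hg : LipschitzWith K g) (hv : AEStronglyMeasurable v μ)
    (hR : ∀ᵐ a ∂μ, ‖v a‖ ≤ R) (x₀ : E) :
    ‖∫ a, g (x₀ + v a) ∂μ - g x₀‖ ≤ K * R := by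
  have hdev : ∀ᵐ a ∂μ, ‖g (x₀ + v a) - g x₀‖ ≤ K * R := hR.mono fun a ha ↦
    calc ‖g (x₀ + v a) - g x₀‖ ≤ K * ‖x₀ + v a - x₀‖ := hg.norm_sub_le _ _
      _ ≤ K * R := by rw [add_sub_cancel_left]; gcongr
  have hint : Integrable (fun a ↦ g (x₀ + v a) - g x₀) μ :=
    .of_bound ((hg.continuous.comp_aestronglyMeasurable (hv.const_add x₀)).sub
      aestronglyMeasurable_const) _ hdev
  have hint' : Integrable (fun a ↦ g (x₀ + v a)) μ :=
    (hint.add (integrable_const (g x₀))).congr (.of_forall fun _ ↦ sub_add_cancel _ _)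
  calc ‖∫ a, g (x₀ + v a) ∂μ - g x₀‖ = ‖∫ a, (g (x₀ + v a) - g x₀) ∂μ‖ := by
        rw [integral_sub hint' (integrable_const _), integral_const, probReal_univ, one_smul]
    _ ≤ K * R := by simpa using norm_integral_le_of_norm_le_const hdev

lemma hasFDerivAt_integral_comp_add [IsFiniteMeasure μ] [NormedSpace ℝ E] [FiniteDimensional ℝ E]
    [NormedSpace ℝ F] [CompleteSpace F] {f : E → F} (hf : ContDiff ℝ 1 f)
    (hv : AEStronglyMeasurable v μ) (hR : ∀ᵐ a ∂μ, ‖v a‖ ≤ R) (x₀ : E) :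
    HasFDerivAt (fun x ↦ ∫ a, f (x + v a) ∂μ) (∫ a, fderiv ℝ f (x₀ + v a) ∂μ) x₀ := by
  have hf' : Continuous (fderiv ℝ f) := hf.continuous_fderiv one_ne_zero
  obtain ⟨C, hC⟩ :=
    (isCompact_closedBall x₀ (1 + R)).exists_bound_of_continuousOn hf'.continuousOn
  have hbound : ∀ᵐ a ∂μ, ∀ x ∈ ball x₀ 1, ‖fderiv ℝ f (x + v a)‖ ≤ C := hR.mono fun a ha x hx ↦ by
    refine hC _ (mem_closedBall_iff_norm.2 ?_)
    calc ‖x + v a - x₀‖ = ‖(x - x₀) + v a‖ := by abel_nf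
      _ ≤ 1 + R := (norm_add_le _ _).trans (add_le_add (mem_ball_iff_norm.1 hx).le ha)
  refine hasFDerivAt_integral_of_dominated_of_fderiv_le (ball_mem_nhds x₀ one_pos)
    (.of_forall fun x ↦ hf.continuous.comp_aestronglyMeasurable (hv.const_add x))
    ((hf.continuous.comp (continuous_const_add x₀)).integrable_comp_of_ae_norm_le hv hR)
    (hf'.comp_aestronglyMeasurable (hv.const_add x₀)) hbound (integrable_const C)
    (.of_forall fun a x _ ↦ ?_)
  exact ((hf.differentiable one_ne_zero (x + v a)).hasFDerivAt.comp x
    ((hasFDerivAt_id x).add_const (v a))).congr_fderiv (by simp)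

end Smoothing

instance isProbabilityMeasure_unifBall (d : ℕ) : IsProbabilityMeasure (unifBall d) := by
  constructor
  rw [unifBall, Measure.smul_apply, Measure.restrict_apply MeasurableSet.univ, Set.univ_inter,
    smul_eq_mul]
  exact ENNReal.inv_mul_cancel (measure_closedBall_pos volume 0 one_pos).ne'
    (isCompact_closedBall (0 : EuclideanSpace ℝ (Fin d)) 1).measure_lt_top.ne

lemma ae_norm_le_one_unifBall (d : ℕ) : ∀ᵐ w ∂unifBall d, ‖w‖ ≤ 1 := by
  refine Measure.ae_smul_measure ?_ _
  filter_upwards [ae_restrict_mem measurableSet_closedBall] with w hw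
  exact mem_closedBall_zero_iff.1 hw

/-- for differentiable `L` with `L`-Lipschitz gradient, the smoothed
gradient is an `O(δ)`-biased approximation: `‖∇L_δ(θ) − ∇L(θ)‖ ≤ δL`. -/
theorem stmt4 (d : ℕ) (hd : 1 ≤ d) (δ : ℝ) (hδ : 0 < δ)
    (L : EuclideanSpace ℝ (Fin d) → ℝ) (hdiff : Differentiable ℝ L)
    (Lc : ℝ) (hgradLip : ∀ θ θ' : EuclideanSpace ℝ (Fin d),
      ‖gradient L θ - gradient L θ'‖ ≤ Lc * ‖θ - θ'‖) :
    ∀ θ : EuclideanSpace ℝ (Fin d),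
      ‖gradient (fun θ' : EuclideanSpace ℝ (Fin d) => ∫ w, L (θ' + δ • w) ∂(unifBall d)) θ -
        gradient L θ‖ ≤ δ * Lc := by
  intro θ
  have : Nonempty (Fin d) := ⟨⟨0, hd⟩⟩
  have hLc : 0 ≤ Lc := nonneg_of_norm_sub_le_mul_norm_sub hgradLip
  have hLip : LipschitzWith ⟨Lc, hLc⟩ (fderiv ℝ L) := .of_dist_le_mul fun x y ↦ by
    rw [dist_eq_norm, dist_eq_norm, ← norm_gradient_sub_gradient]
    exact hgradLip x y
  have hL : ContDiff ℝ 1 L := contDiff_one_iff_fderiv.2 ⟨hdiff, hLip.continuous⟩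
  have hsmul : AEStronglyMeasurable (fun w ↦ δ • w) (unifBall d) :=
    (continuous_const_smul δ).aestronglyMeasurable
  have hnorm : ∀ᵐ w ∂unifBall d, ‖δ • w‖ ≤ δ := (ae_norm_le_one_unifBall d).mono fun w hw ↦ by
    rw [norm_smul, Real.norm_of_nonneg hδ.le]
    exact mul_le_of_le_one_right hδ.le hw
  rw [norm_gradient_sub_gradient, (hasFDerivAt_integral_comp_add hL hsmul hnorm θ).fderiv,
    mul_comm]
  exact norm_integral_comp_add_sub_le hLip hsmul hnorm θ
end

section
/- Let Z be a measurable space, ℓ : ℝ^d × Z → ℝ a measurable loss, and (Π_θ)_{θ∈ℝ^d} a family of probability measures on Z. Assume: (i) ℓ is L₀-Lipschitz in θ uniformly in z, i.e., |ℓ(θ₁; z) − ℓ(θ₂; z)| ≤ L₀‖θ₁ − θ₂‖ for all θ₁, θ₂ ∈ ℝ^d and z ∈ Z; (ii) |ℓ(θ; z)| ≤ G for all θ, z; (iii) d_TV(Π_{θ₁}, Π_{θ₂}) ≤ L₁‖θ₁ − θ₂‖ for all θ₁, θ₂ ∈ ℝ^d. Then the performative risk L(θ) := E_{Z∼Π_θ}[ℓ(θ;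 Z)] is (L₀ + 2 L₁ G)-Lipschitz continuous, i.e., |L(θ₁) − L(θ₂)| ≤ (L₀ + 2 L₁ G)‖θ₁ − θ₂‖ for all θ₁, θ₂ ∈ ℝ^d. -/
/-!
Split `L(θ₁) - L(θ₂)` at the mixed term `E_{Π_{θ₁}}[ℓ(θ₂; Z)]`. The first difference compares two
losses under one distribution and is at most `L₀‖θ₁ - θ₂‖`. The second compares one loss,
bounded by `G`, under two distributions: shifting it by `G` gives a function with values in
`[0, 2G]`, and on a Hahn decomposition `s` for `(Π_{θ₁}, Π_{θ₂})` such a function changes its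
integral by at most `2G (Π_{θ₁}(s) - Π_{θ₂}(s)) ≤ 2G d_TV(Π_{θ₁}, Π_{θ₂}) ≤ 2 L₁ G ‖θ₁ - θ₂‖`.
-/

open MeasureTheory

/-- Total variation distance `d_TV(μ, ν) = sup_{A measurable} (μ(A) − ν(A))`. -/
noncomputable def dTV {Z : Type*} [MeasurableSpace Z] (μ ν : Measure Z) : ℝ :=
  ⨆ A : {A : Set Z // MeasurableSet A}, ((μ A.1).toReal - (ν A.1).toReal)

theorem MeasureTheory.Measure.restrict_le_restrict_of_subset_le {Z : Type*} [MeasurableSpace Z]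
    {μ ν : Measure Z} {s : Set Z} (hs : MeasurableSet s)
    (h : ∀ t, MeasurableSet t → t ⊆ s → μ t ≤ ν t) :
    μ.restrict s ≤ ν.restrict s :=
  Measure.le_intro fun t ht _ => by
    rw [Measure.restrict_apply ht, Measure.restrict_apply ht]
    exact h _ (ht.inter hs) Set.inter_subset_right

section TotalVariation

variable {Z : Type*} [MeasurableSpace Z] {μ ν : Measure Z}

theorem measureReal_sub_le_dTV [IsFiniteMeasure μ] {A : Set Z} (hA : MeasurableSet A) :
    μ.real A - ν.real A ≤ dTV μ ν := by
  refine le_ciSup (f := fun B : {B : Set Z // MeasurableSet B} => μ.real B.1 - ν.real B.1)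
    ⟨μ.real Set.univ, ?_⟩ ⟨A, hA⟩
  rintro _ ⟨B, rfl⟩
  have hμB : μ.real B.1 ≤ μ.real Set.univ := measureReal_mono (Set.subset_univ _)
  have hνB : 0 ≤ ν.real B.1 := measureReal_nonneg
  exact (sub_le_self _ hνB).trans hμB

theorem integral_sub_integral_le_mul_dTV [IsFiniteMeasure μ] [IsFiniteMeasure ν] {g : Z → ℝ}
    {C : ℝ} (hC : 0 ≤ C) (hg : Measurable g) (hg₀ : ∀ z, 0 ≤ g z) (hgC : ∀ z, g z ≤ C) :
    ∫ z, g z ∂μ - ∫ z, g z ∂ν ≤ C * dTV μ ν := by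
  obtain ⟨s, hs, hνμ, hμν⟩ := hahn_decomposition μ ν
  have hint : ∀ (ρ : Measure Z) [IsFiniteMeasure ρ], Integrable g ρ := fun ρ _ =>
    .of_bound hg.aestronglyMeasurable C
      (ae_of_all _ fun z => (Real.norm_of_nonneg (hg₀ z)).trans_le (hgC z))
  have hcompl : ∫ z in sᶜ, g z ∂μ ≤ ∫ z in sᶜ, g z ∂ν :=
    integral_mono_measure (Measure.restrict_le_restrict_of_subset_le hs.compl hμν)
      (ae_of_all _ hg₀) (hint (ν.restrict sᶜ))
  -- On `s` the roles of `μ` and `ν` swap, so compare the integrals of the nonnegative `C - g`.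
  have hon : ∫ z in s, (C - g z) ∂ν ≤ ∫ z in s, (C - g z) ∂μ :=
    integral_mono_measure (Measure.restrict_le_restrict_of_subset_le hs hνμ)
      (ae_of_all _ fun z => sub_nonneg.2 (hgC z))
      ((integrable_const C).sub (hint (μ.restrict s)))
  rw [integral_sub (integrable_const C) (hint _), integral_sub (integrable_const C) (hint _),
    setIntegral_const, setIntegral_const, smul_eq_mul, smul_eq_mul] at hon
  have hdTV := mul_le_mul_of_nonneg_left (measureReal_sub_le_dTV (μ := μ) (ν := ν) hs) hC
  rw [← integral_add_compl hs (hint μ), ← integral_add_compl hs (hint ν)]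
  linarith

theorem integral_sub_integral_le_two_mul_dTV [IsProbabilityMeasure μ] [IsProbabilityMeasure ν]
    {f : Z → ℝ} {G : ℝ} (hf : Measurable f) (hfG : ∀ z, |f z| ≤ G) :
    ∫ z, f z ∂μ - ∫ z, f z ∂ν ≤ 2 * G * dTV μ ν := by
  have hG : 0 ≤ G := (abs_nonneg _).trans (hfG (nonempty_of_isProbabilityMeasure μ).some)
  have hint : ∀ (ρ : Measure Z) [IsProbabilityMeasure ρ], Integrable f ρ := fun ρ _ =>
    .of_bound hf.aestronglyMeasurable G (ae_of_all _ hfG)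
  have hshift : ∀ (ρ : Measure Z) [IsProbabilityMeasure ρ],
      ∫ z, (f z + G) ∂ρ = ∫ z, f z ∂ρ + G := fun ρ _ => by
    rw [integral_add (hint ρ) (integrable_const G), integral_const, probReal_univ, one_smul]
  have := integral_sub_integral_le_mul_dTV (μ := μ) (ν := ν) (by linarith : 0 ≤ 2 * G)
    (hf.add_const G) (fun z => by linarith [neg_abs_le (f z), hfG z])
    (fun z => by linarith [le_abs_self (f z), hfG z])
  rwa [hshift, hshift, add_sub_add_right_eq_sub] at this

theorem abs_integral_sub_integral_le_two_mul_dTV [IsProbabilityMeasure μ]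
    [IsProbabilityMeasure ν] {f : Z → ℝ} {G : ℝ} (hf : Measurable f) (hfG : ∀ z, |f z| ≤ G) :
    |∫ z, f z ∂μ - ∫ z, f z ∂ν| ≤ 2 * G * dTV μ ν := by
  refine abs_sub_le_iff.2 ⟨integral_sub_integral_le_two_mul_dTV hf hfG, ?_⟩
  have := integral_sub_integral_le_two_mul_dTV (μ := μ) (ν := ν) hf.neg
    (fun z => (abs_neg (f z)).trans_le (hfG z))
  simp only [Pi.neg_apply, integral_neg] at this
  linarith

theorem abs_integral_sub_integral_le_of_abs_sub_le [IsProbabilityMeasure μ] {f g : Z → ℝ}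
    {K : ℝ} (hf : Integrable f μ) (hg : Integrable g μ) (hfg : ∀ z, |f z - g z| ≤ K) :
    |∫ z, f z ∂μ - ∫ z, g z ∂μ| ≤ K := by
  rw [← integral_sub hf hg]
  simpa using norm_integral_le_of_norm_le_const (μ := μ)
    (ae_of_all _ fun z => (Real.norm_eq_abs _).trans_le (hfg z))

end TotalVariation

/-- if `ℓ` is `L₀`-Lipschitz in `θ` uniformly in `z`, bounded by `G`, and the
distribution map is `L₁`-Lipschitz in total variation, then the performative risk
`L(θ) = E_{Z∼Π_θ}[ℓ(θ;Z)]` is `(L₀ + 2L₁G)`-Lipschitz. -/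
theorem stmt7 (d : ℕ) {Z : Type*} [MeasurableSpace Z]
    (ℓ : EuclideanSpace ℝ (Fin d) → Z → ℝ)
    (hℓmeas : Measurable (Function.uncurry ℓ))
    (L₀ : ℝ) (hℓLip : ∀ (θ₁ θ₂ : EuclideanSpace ℝ (Fin d)) (z : Z),
      |ℓ θ₁ z - ℓ θ₂ z| ≤ L₀ * ‖θ₁ - θ₂‖)
    (G : ℝ) (hℓbdd : ∀ θ z, |ℓ θ z| ≤ G)
    (P : EuclideanSpace ℝ (Fin d) → Measure Z)
    (hP : ∀ θ, IsProbabilityMeasure (P θ))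
    (L₁ : ℝ)
    (hTV : ∀ θ₁ θ₂ : EuclideanSpace ℝ (Fin d), dTV (P θ₁) (P θ₂) ≤ L₁ * ‖θ₁ - θ₂‖) :
    ∀ θ₁ θ₂ : EuclideanSpace ℝ (Fin d),
      |(∫ z, ℓ θ₁ z ∂(P θ₁)) - ∫ z, ℓ θ₂ z ∂(P θ₂)| ≤ (L₀ + 2 * L₁ * G) * ‖θ₁ - θ₂‖ := by
  intro θ₁ θ₂
  have := hP θ₁
  have := hP θ₂
  have hmeas : ∀ θ, Measurable (ℓ θ) := fun θ => hℓmeas.of_uncurry_left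
  have hint : ∀ θ, Integrable (ℓ θ) (P θ₁) := fun θ =>
    .of_bound (hmeas θ).aestronglyMeasurable G (ae_of_all _ (hℓbdd θ))
  have hG : 0 ≤ G := (abs_nonneg _).trans (hℓbdd θ₁ (nonempty_of_isProbabilityMeasure (P θ₁)).some)
  calc |(∫ z, ℓ θ₁ z ∂(P θ₁)) - ∫ z, ℓ θ₂ z ∂(P θ₂)|
      ≤ |(∫ z, ℓ θ₁ z ∂(P θ₁)) - ∫ z, ℓ θ₂ z ∂(P θ₁)|
        + |(∫ z, ℓ θ₂ z ∂(P θ₁)) - ∫ z, ℓ θ₂ z ∂(P θ₂)| := abs_sub_le _ _ _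
    _ ≤ L₀ * ‖θ₁ - θ₂‖ + 2 * G * dTV (P θ₁) (P θ₂) :=
        add_le_add (abs_integral_sub_integral_le_of_abs_sub_le (hint θ₁) (hint θ₂) (hℓLip θ₁ θ₂))
          (abs_integral_sub_integral_le_two_mul_dTV (hmeas θ₂) (hℓbdd θ₂))
    _ ≤ L₀ * ‖θ₁ - θ₂‖ + 2 * G * (L₁ * ‖θ₁ - θ₂‖) := by gcongr; exact hTV θ₁ θ₂
    _ = (L₀ + 2 * L₁ * G) * ‖θ₁ - θ₂‖ := by ring
end
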